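/- arXiv:math/9204208 — 3 statements merged into one kernel-verified Lean document; each statement's English description precedes it below -/
import Mathlib

section
/- For all p, q, r ∈ B∞, both p[q[r]] and (p[q])[p[r]] are equal to p·s(q)·s²(r)·σ_2·σ_1·s²(q)^{-1}·s(p)^{-1}, where s² denotes s composed with itself. -/
/-- Relators of the infinite braid group `B∞`: commutation `σ_i σ_j = σ_j σ_i` for
`|i - j| > 1` and the braid relation `σ_i σ_j σ_i = σ_j σ_i σ_j` for `|i - j| = 1`. -/
def braidRels : Set (FreeGroup ℕ+) :=
  {r | (∃ i j : ℕ+, (i : ℕ) + 1 < (j : ℕ) ∧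
        r = FreeGroup.of i * FreeGroup.of j * (FreeGroup.of i)⁻¹ * (FreeGroup.of j)⁻¹) ∨
       (∃ i : ℕ+,
        r = FreeGroup.of i * FreeGroup.of (i + 1) * FreeGroup.of i *
            (FreeGroup.of (i + 1))⁻¹ * (FreeGroup.of i)⁻¹ * (FreeGroup.of (i + 1))⁻¹)}

/-- The infinite braid group `B∞`. -/
abbrev Binf : Type := PresentedGroup braidRels

/-- The generator `σ_i` (`i ≥ 1`) of the infinite braid group. -/
def braidGen (i : ℕ+) : Binf := PresentedGroup.of i

/-- The Dehornoy bracket `p[q] = p · s(q) · σ_1 · s(p)⁻¹`, relative to the shift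
endomorphism `s`. -/
def bracket (s : Binf →* Binf) (p q : Binf) : Binf :=
  p * s q * braidGen 1 * (s p)⁻¹

lemma braid_rel_one {r : FreeGroup ℕ+} (hr : r ∈ braidRels) :
    PresentedGroup.mk braidRels r = 1 := by
  exact (QuotientGroup.eq_one_iff _).mpr (Subgroup.subset_normalClosure hr)

lemma braid_comm {i j : ℕ+} (h : (i : ℕ) + 1 < (j : ℕ)) :
    Commute (braidGen i) (braidGen j) := by
  have := braid_rel_one (Or.inl ⟨i, j, h, rfl⟩)
  simp only [map_mul, map_inv] at this
  have h1 := mul_inv_eq_one.mp this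
  exact mul_inv_eq_iff_eq_mul.mp h1

lemma braid_braid (i : ℕ+) :
    braidGen i * braidGen (i + 1) * braidGen i
      = braidGen (i + 1) * braidGen i * braidGen (i + 1) := by
  have := braid_rel_one (Or.inr ⟨i, rfl⟩)
  simp only [map_mul, map_inv] at this
  change (braidGen i * braidGen (i+1) * braidGen i) *
    (braidGen (i+1))⁻¹ * (braidGen i)⁻¹ * (braidGen (i+1))⁻¹ = 1 at this
  have := mul_eq_one_iff_eq_inv.mp this
  rw [inv_inv] at this
  have h2 : braidGen i * braidGen (i+1) * braidGen i
      = braidGen (i+1) * braidGen i * braidGen (i+1) := by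
    have h3 := congrArg (· * braidGen i * braidGen (i+1)) this
    simpa [mul_assoc] using h3
  exact h2

lemma comm_s2 (s : Binf →* Binf) (hs : ∀ i : ℕ+, s (braidGen i) = braidGen (i + 1))
    (x : Binf) : Commute (braidGen 1) (s (s x)) := by
  have : x ∈ Subgroup.comap (s.comp s) (Subgroup.centralizer {braidGen 1}) := by
    apply PresentedGroup.generated_by
    intro j
    simp only [Subgroup.mem_comap, MonoidHom.comp_apply]
    rw [Subgroup.mem_centralizer_singleton_iff]
    have hgen : s (s (PresentedGroup.of j : Binf)) = braidGen (j + 1 + 1) := by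
      change s (s (braidGen j)) = _
      rw [hs, hs]
    rw [hgen]
    have h : ((1 : ℕ+) : ℕ) + 1 < ((j + 1 + 1 : ℕ+) : ℕ) := by
      have hj := j.pos
      simp only [PNat.add_coe, PNat.one_coe]
      omega
    exact (braid_comm h).eq.symm
  rw [Subgroup.mem_comap, Subgroup.mem_centralizer_singleton_iff] at this
  exact this.symm

/-- Both `p[q[r]]` and `(p[q])[p[r]]` equal
`p · s(q) · s²(r) · σ_2 · σ_1 · s²(q)⁻¹ · s(p)⁻¹`. -/
theorem bracket_expansion
    (s : Binf →* Binf) (hs : ∀ i : ℕ+, s (braidGen i) = braidGen (i + 1))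
    (p q r : Binf) :
    bracket s p (bracket s q r) =
      p * s q * s (s r) * braidGen 2 * braidGen 1 * (s (s q))⁻¹ * (s p)⁻¹ ∧
    bracket s (bracket s p q) (bracket s p r) =
      p * s q * s (s r) * braidGen 2 * braidGen 1 * (s (s q))⁻¹ * (s p)⁻¹ := by
  have hσ1 : s (braidGen 1) = braidGen 2 := hs 1
  have hc : ∀ (x : Binf) (X : Binf),
      (s (s x))⁻¹ * (braidGen 1 * X) = braidGen 1 * ((s (s x))⁻¹ * X) := by
    intro x X
    rw [← mul_assoc, ← ((comm_s2 s hs x).inv_right).eq, mul_assoc]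
  have hc' : ∀ (x : Binf) (X : Binf),
      s (s x) * (braidGen 1 * X) = braidGen 1 * (s (s x) * X) := by
    intro x X
    rw [← mul_assoc, ← (comm_s2 s hs x).eq, mul_assoc]
  have hbr : braidGen 1 * braidGen 2 * braidGen 1 = braidGen 2 * braidGen 1 * braidGen 2 :=
    braid_braid 1
  constructor
  · simp only [bracket, map_mul, map_inv, hσ1, mul_assoc]
    rw [hc q]
  · simp only [bracket, map_mul, map_inv, hσ1, mul_inv_rev, inv_inv, mul_assoc]
    rw [inv_mul_cancel_left, hc p, inv_mul_cancel_left, ← hc' r]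
    congr 3
    have key : braidGen 1 * braidGen 2 * braidGen 1 * (braidGen 2)⁻¹ = braidGen 2 * braidGen 1 := by
      rw [hbr]; group
    calc braidGen 1 * (braidGen 2 * (braidGen 1 * ((braidGen 2)⁻¹ * ((s (s q))⁻¹ * (s p)⁻¹))))
        = (braidGen 1 * braidGen 2 * braidGen 1 * (braidGen 2)⁻¹) *
            ((s (s q))⁻¹ * (s p)⁻¹) := by simp [mul_assoc]
      _ = braidGen 2 * (braidGen 1 * ((s (s q))⁻¹ * (s p)⁻¹)) := by rw [key]; simp [mul_assoc]
end

section
/- (Irreflexivity in B∞.) For every k ≥ 1 and all p, q_1, …, q_k ∈ B∞, p ≠ (((p[q_1])[q_2])…)[q_k]. -/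
/-!
Let `B∞` act on the free group on `x₁, x₂, …` through the Artin representation, `σᵢ` acting by
`xᵢ ↦ xᵢ xᵢ₊₁ xᵢ⁻¹`, `xᵢ₊₁ ↦ xᵢ`, and let `S` be the set of elements whose reduced word ends
with `x₁⁻¹`. Split a reduced word at its last letter `x₁^{±1}`: `w = u x₁^{±1} h` with `h` a word
in `x₂, x₃, …`. An automorphism fixing `x₁` and preserving the subgroup generated by
`x₂, x₃, …` maps this to a reduced splitting of the same shape (induction on `u`), so it
stabilizes `S`; this applies to every shifted braid `s(q)`. For `σ₁` the image is
`σ₁(u) x₁ · x₂^{±1} · x₁⁻¹ σ₁(h)`, and by the same induction the letter `x₂^{±1}` is never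
cancelled; hence `σ₁` sends `x₁` and all of `S` into `S` (Larue's lemma). Since
`p⁻¹ · p[q] = s(q) σ₁ s(p)⁻¹`, the braid `p⁻¹ · p[q₁]…[q_k]` is a product of braids sending
`{x₁} ∪ S` into `S`, which the identity does not do, as `x₁ ∉ S`.
-/

namespace FreeGroup

variable {α : Type*} {a a' : α} {c : Bool} {u v w y : FreeGroup α}

def avoid (a : α) : Subgroup (FreeGroup α) := Subgroup.closure (of '' {a}ᶜ)

theorem of_mem_avoid {b : α} (hb : b ≠ a) : of b ∈ avoid a :=
  Subgroup.subset_closure ⟨b, hb, rfl⟩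

theorem mk_singleton (l : α × Bool) : mk [l] = bif l.2 then of l.1 else (of l.1)⁻¹ := by
  obtain ⟨b, _ | _⟩ := l
  · rw [of, inv_mk]; rfl
  · rfl

theorem map_mk_singleton_of_eq_conj {φ : MulAut (FreeGroup α)}
    (hφa : φ (of a) = of a * of a' * (of a)⁻¹) (c : Bool) :
    φ (mk [(a, c)]) = of a * mk [(a', c)] * (of a)⁻¹ := by
  cases c <;> simp [mk_singleton, hφa, mul_assoc]

theorem mulEquiv_ext {β : Type*} [Group β] {e e' : FreeGroup α ≃* β}
    (h : ∀ a, e (of a) = e' (of a)) : e = e' :=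
  MulEquiv.toMonoidHom_injective (ext_hom _ _ h)

theorem mk_mem_avoid {L : List (α × Bool)} (h : ∀ l ∈ L, l.1 ≠ a) : mk L ∈ avoid a := by
  induction L with
  | nil => exact one_mem _
  | cons l L ih =>
    rw [← List.singleton_append, ← mul_mk]
    refine mul_mem ?_ (ih fun l' hl' => h l' (List.mem_cons_of_mem _ hl'))
    have hl := of_mem_avoid (h l List.mem_cons_self)
    cases hc : l.2 <;> simp [mk_singleton, hc, hl]

theorem forall_map_mem_avoid {f : FreeGroup α →* FreeGroup α}
    (h : ∀ b ≠ a, f (of b) ∈ avoid a') : ∀ w ∈ avoid a, f w ∈ avoid a' :=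
  fun _ hw => (Subgroup.closure_le (K := (avoid a').comap f)).2
    (by rintro _ ⟨b, hb, rfl⟩; exact h b hb) hw

variable [DecidableEq α]

def EndsWith (w : FreeGroup α) (l : α × Bool) : Prop := w.toWord.getLast? = some l

theorem mem_avoid_iff : w ∈ avoid a ↔ ∀ l ∈ w.toWord, l.1 ≠ a := by
  refine ⟨fun hw => ?_, fun hw => mk_toWord (x := w) ▸ mk_mem_avoid hw⟩
  induction hw using Subgroup.closure_induction with
  | mem x hx =>
    obtain ⟨b, hb, rfl⟩ := hx
    simpa [toWord_of] using hb
  | one => simp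
  | mul x y _ _ hx hy =>
    intro l hl
    rcases List.mem_append.mp ((toWord_mul_sublist x y).mem hl) with h | h
    exacts [hx l h, hy l h]
  | inv x _ hx =>
    intro l hl
    simp only [toWord_inv, invRev, List.mem_reverse, List.mem_map] at hl
    obtain ⟨l', hl', rfl⟩ := hl
    exact hx l' hl'

theorem EndsWith.unique {l l' : α × Bool} (h : w.EndsWith l) (h' : w.EndsWith l') : l = l' :=
  Option.some_injective _ (h.symm.trans h')

theorem not_endsWith_of_mem_avoid (hw : w ∈ avoid a) (b : Bool) : ¬ w.EndsWith (a, b) :=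
  fun h => mem_avoid_iff.mp hw _ (List.mem_of_getLast? h) rfl

theorem toWord_mul_mk_mul (hv : ¬ v.EndsWith (a, !c)) (hy : y ∈ avoid a) :
    (v * mk [(a, c)] * y).toWord = v.toWord ++ (a, c) :: y.toWord := by
  have hred : IsReduced (v.toWord ++ (a, c) :: y.toWord) := by
    refine List.isChain_append.mpr
      ⟨isReduced_toWord, List.isChain_cons.mpr ⟨?_, isReduced_toWord⟩, ?_⟩
    · intro l hl hal
      exact absurd hal.symm (mem_avoid_iff.mp hy l (List.mem_of_mem_head? hl))
    · rintro ⟨b, d⟩ hl _ hx rfl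
      cases hx
      by_contra hd
      obtain rfl : d = !c := Bool.eq_not.mpr hd
      exact hv hl
  rw [← mk_toWord (x := v), ← mk_toWord (x := y), mul_mk, mul_mk, toWord_mk, mk_toWord,
    mk_toWord, List.append_assoc, List.singleton_append, hred.reduce_eq]

theorem endsWith_mul_mk (hv : ¬ v.EndsWith (a, !c)) : (v * mk [(a, c)]).EndsWith (a, c) := by
  simpa [EndsWith] using congrArg List.getLast? (toWord_mul_mk_mul hv (one_mem (avoid a)))

theorem endsWith_mul_mk_mul_iff (hv : ¬ v.EndsWith (a, !c)) (hy : y ∈ avoid a) (b : Bool) :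
    (v * mk [(a, c)] * y).EndsWith (a, b) ↔ y = 1 ∧ c = b := by
  rw [EndsWith, toWord_mul_mk_mul hv hy]
  rcases eq_or_ne y 1 with rfl | hy1
  · simp
  · have hne : y.toWord ≠ [] := by rwa [Ne, toWord_eq_nil_iff]
    simpa [List.getLast?_append, List.getLast?_cons, List.getLast?_eq_some_getLast hne, hy1,
      EndsWith] using not_endsWith_of_mem_avoid hy b

theorem forall_fst_ne_or_eq_append_cons (a : α) (L : List (α × Bool)) :
    (∀ l ∈ L, l.1 ≠ a) ∨ ∃ L₁ c L₂, L = L₁ ++ (a, c) :: L₂ ∧ ∀ l ∈ L₂, l.1 ≠ a := by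
  induction L using List.reverseRecOn with
  | nil => simp
  | append_singleton L l ih =>
    by_cases hl : l.1 = a
    · exact .inr ⟨L, l.2, [], by rw [← hl], by simp⟩
    · rcases ih with h | ⟨L₁, c, L₂, rfl, h⟩
      · refine .inl fun l' hl' => ?_
        rcases List.mem_append.mp hl' with h' | h'
        exacts [h l' h', List.eq_of_mem_singleton h' ▸ hl]
      · refine .inr ⟨L₁, c, L₂ ++ [l], by simp, fun l' hl' => ?_⟩
        rcases List.mem_append.mp hl' with h' | h'
        exacts [h l' h', List.eq_of_mem_singleton h' ▸ hl]

theorem mem_avoid_or_eq_mul_mk_mul (a : α) (w : FreeGroup α) :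
    w ∈ avoid a ∨ ∃ u c h, h ∈ avoid a ∧ ¬ u.EndsWith (a, !c) ∧ u.norm < w.norm ∧
      w = u * mk [(a, c)] * h := by
  rcases forall_fst_ne_or_eq_append_cons a w.toWord with hw | ⟨L₁, c, L₂, hw, hL₂⟩
  · exact .inl (mem_avoid_iff.mpr hw)
  right
  have hred : IsReduced (L₁ ++ (a, c) :: L₂) := hw ▸ isReduced_toWord
  have hL₁ : (mk L₁).toWord = L₁ := by
    rw [toWord_mk, (hred.infix ⟨[], (a, c) :: L₂, by simp⟩).reduce_eq]
  refine ⟨mk L₁, c, mk L₂, mk_mem_avoid hL₂, ?_, ?_, ?_⟩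
  · intro h
    rw [EndsWith, hL₁] at h
    have := (List.isChain_append.mp hred).2.2 _ h _ rfl rfl
    simp at this
  · simp [norm, hL₁, hw]
  · rw [mul_mk, mul_mk, List.append_assoc, List.singleton_append, ← hw, mk_toWord]

theorem endsWith_map_iff {e : MulAut (FreeGroup α)} (he : e (of a) = of a)
    (hmem : ∀ w ∈ avoid a, e w ∈ avoid a) (w : FreeGroup α) (b : Bool) :
    (e w).EndsWith (a, b) ↔ w.EndsWith (a, b) := by
  rcases mem_avoid_or_eq_mul_mk_mul a w with hw | ⟨u, c, h, hh, hu, hlt, rfl⟩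
  · simp only [not_endsWith_of_mem_avoid hw, not_endsWith_of_mem_avoid (hmem w hw)]
  have heu : ¬ (e u).EndsWith (a, !c) := (endsWith_map_iff he hmem u !c).not.mpr hu
  have hletter : e (mk [(a, c)]) = mk [(a, c)] := by cases c <;> simp [mk_singleton, he]
  rw [_root_.map_mul, _root_.map_mul, hletter, endsWith_mul_mk_mul_iff heu (hmem h hh),
    endsWith_mul_mk_mul_iff hu hh, map_eq_one_iff _ e.injective]
termination_by w.norm

section

variable {φ : MulAut (FreeGroup α)}

theorem not_endsWith_map_mul_of (haa' : a ≠ a') (hφa : φ (of a) = of a * of a' * (of a)⁻¹)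
    (hφ : ∀ w ∈ avoid a, φ w ∈ avoid a') (u : FreeGroup α) (b : Bool)
    (hu : ¬ u.EndsWith (a, !b)) : ¬ (φ u * of a).EndsWith (a', !b) := by
  rcases mem_avoid_or_eq_mul_mk_mul a u with hu' | ⟨u, c, h, hh, hc, hlt, rfl⟩
  · exact not_endsWith_of_mem_avoid (mul_mem (hφ u hu') (of_mem_avoid haa')) _
  have ih := not_endsWith_map_mul_of haa' hφa hφ u c hc
  have hk : (of a)⁻¹ * φ h * of a ∈ avoid a' :=
    mul_mem (mul_mem (inv_mem (of_mem_avoid haa')) (hφ h hh)) (of_mem_avoid haa')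
  have hsplit : φ (u * mk [(a, c)] * h) * of a =
      (φ u * of a) * mk [(a', c)] * ((of a)⁻¹ * φ h * of a) := by
    simp only [_root_.map_mul, map_mk_singleton_of_eq_conj hφa]; group
  rw [hsplit, endsWith_mul_mk_mul_iff ih hk]
  -- `k = 1` forces `h = 1`, and then `c ≠ !b` because `u` ends with `(a, c)`
  rintro ⟨hk1, rfl⟩
  obtain rfl : h = 1 := by simpa [mul_assoc, inv_mul_eq_one] using hk1
  exact hu (by simpa using endsWith_mul_mk hc)
termination_by u.norm

theorem endsWith_map_mul_mk (haa' : a ≠ a') (hφa : φ (of a) = of a * of a' * (of a)⁻¹)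
    (hφ : ∀ w ∈ avoid a, φ w ∈ avoid a') (hu : ¬ u.EndsWith (a, !c)) :
    (φ (u * mk [(a, c)])).EndsWith (a, false) := by
  have h := endsWith_mul_mk (not_endsWith_map_mul_of haa' hφa hφ u c hu)
  have hinv : (of a)⁻¹ = mk [(a, false)] := (mk_singleton (a, false)).symm
  rw [_root_.map_mul, map_mk_singleton_of_eq_conj hφa, ← mul_assoc, ← mul_assoc, hinv]
  exact endsWith_mul_mk fun h' => haa' (congrArg Prod.fst (h'.unique h))

theorem mapsTo_insert_endsWith_of_eq_conj (haa' : a ≠ a')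
    (hφa : φ (of a) = of a * of a' * (of a)⁻¹) (hφ : ∀ w ∈ avoid a, φ w ∈ avoid a') :
    Set.MapsTo φ (insert (of a) {w | w.EndsWith (a, false)}) {w | w.EndsWith (a, false)} := by
  rintro w (rfl | hw)
  · simpa [mk_singleton] using
      endsWith_map_mul_mk haa' hφa hφ (u := 1) (c := true) (by simp [EndsWith])
  rcases mem_avoid_or_eq_mul_mk_mul a w with hw' | ⟨u, c, h, hh, hu, -, rfl⟩
  · exact absurd hw (not_endsWith_of_mem_avoid hw' _)
  obtain ⟨rfl, rfl⟩ := (endsWith_mul_mk_mul_iff hu hh false).mp hw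
  simpa using endsWith_map_mul_mk haa' hφa hφ hu

end

end FreeGroup

open FreeGroup

def artinGenImage (i n : ℕ+) : FreeGroup ℕ+ :=
  if n = i then of i * of (i + 1) * (of i)⁻¹ else if n = i + 1 then of i else of n

def artinGenInvImage (i n : ℕ+) : FreeGroup ℕ+ :=
  if n = i then of (i + 1) else if n = i + 1 then (of (i + 1))⁻¹ * of i * of (i + 1) else of n

def artinAut (i : ℕ+) : MulAut (FreeGroup ℕ+) :=
  MonoidHom.toMulEquiv (FreeGroup.lift (artinGenImage i)) (FreeGroup.lift (artinGenInvImage i))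
    (by
      ext n
      simp only [MonoidHom.comp_apply, lift_apply_of, MonoidHom.id_apply, artinGenImage]
      split_ifs <;> simp_all [artinGenInvImage, (PNat.lt_add_right i 1).ne', mul_assoc])
    (by
      ext n
      simp only [MonoidHom.comp_apply, lift_apply_of, MonoidHom.id_apply, artinGenInvImage]
      split_ifs <;> simp_all [artinGenImage, (PNat.lt_add_right i 1).ne', mul_assoc])

@[simp] theorem artinAut_apply_of (i n : ℕ+) : artinAut i (of n) = artinGenImage i n :=
  lift_apply_of

theorem artinAut_comm {i j : ℕ+} (hij : (i : ℕ) + 1 < j) :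
    artinAut i * artinAut j = artinAut j * artinAut i := by
  have h₁ : i ≠ j := ne_of_apply_ne PNat.val (by omega)
  have h₂ : i ≠ j + 1 := ne_of_apply_ne PNat.val (by push_cast; omega)
  have h₃ : i + 1 ≠ j := ne_of_apply_ne PNat.val (by push_cast; omega)
  have h₄ : i + 1 ≠ j + 1 := ne_of_apply_ne PNat.val (by push_cast; omega)
  refine mulEquiv_ext fun n => ?_
  simp only [MulAut.mul_apply, artinAut_apply_of, artinGenImage]
  split_ifs <;>
    simp_all [artinGenImage, (PNat.lt_add_right i 1).ne', h₁.symm, h₂.symm, h₃.symm, h₄.symm]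

theorem artinAut_braid (i : ℕ+) :
    artinAut i * artinAut (i + 1) * artinAut i =
      artinAut (i + 1) * artinAut i * artinAut (i + 1) := by
  have h₁ : i + 1 ≠ i := ne_of_apply_ne PNat.val (by push_cast; omega)
  have h₂ : i + 1 + 1 ≠ i + 1 := ne_of_apply_ne PNat.val (by push_cast; omega)
  have h₃ : i + 1 + 1 ≠ i := ne_of_apply_ne PNat.val (by push_cast; omega)
  refine mulEquiv_ext fun n => ?_
  simp only [MulAut.mul_apply, artinAut_apply_of, artinGenImage]
  split_ifs <;> simp_all [artinGenImage, h₁.symm, h₃.symm, mul_assoc]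

theorem lift_artinAut_of_mem_braidRels : ∀ r ∈ braidRels, FreeGroup.lift artinAut r = 1 := by
  rintro r (⟨i, j, hij, rfl⟩ | ⟨i, rfl⟩)
  · simp only [_root_.map_mul, _root_.map_inv, lift_apply_of, artinAut_comm hij]
    group
  · simp only [_root_.map_mul, _root_.map_inv, lift_apply_of, artinAut_braid]
    group

def artinRep : Binf →* MulAut (FreeGroup ℕ+) :=
  PresentedGroup.toGroup lift_artinAut_of_mem_braidRels

theorem artinRep_braidGen (i : ℕ+) : artinRep (braidGen i) = artinAut i :=
  PresentedGroup.toGroup.of _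

theorem artinAut_one_apply_of_one : artinAut 1 (of 1) = of 1 * of 2 * (of 1)⁻¹ := by
  simp [artinGenImage]; rfl

theorem artinAut_one_mem_avoid : ∀ w ∈ avoid 1, artinAut 1 w ∈ avoid 2 :=
  forall_map_mem_avoid (f := (artinAut 1).toMonoidHom) fun b hb => by
    simp only [MulEquiv.coe_toMonoidHom, artinAut_apply_of, artinGenImage, if_neg hb]
    split_ifs with h2
    exacts [of_mem_avoid (by decide), of_mem_avoid h2]

theorem artinAut_apply_of_one {i : ℕ+} (hi : i ≠ 1) : artinAut i (of 1) = of 1 := by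
  have hi' : (1 : ℕ+) ≠ i + 1 := ne_of_apply_ne PNat.val (by have := i.pos; push_cast; omega)
  simp [artinGenImage, hi.symm, hi']

theorem artinAut_mem_avoid {i : ℕ+} (hi : i ≠ 1) : ∀ w ∈ avoid 1, artinAut i w ∈ avoid 1 := by
  have hi' : i + 1 ≠ 1 := ne_of_apply_ne PNat.val (by have := i.pos; push_cast; omega)
  refine forall_map_mem_avoid (f := (artinAut i).toMonoidHom) fun b hb => ?_
  simp only [MulEquiv.coe_toMonoidHom, artinAut_apply_of, artinGenImage]
  split_ifs
  · exact mul_mem (mul_mem (of_mem_avoid hi) (of_mem_avoid hi')) (inv_mem (of_mem_avoid hi))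
  · exact of_mem_avoid hi
  · exact of_mem_avoid hb

def endsWithInvOne : Set (FreeGroup ℕ+) := {w | w.EndsWith (1, false)}

open scoped Pointwise in
def endsWithInvOneStab : Subgroup (MulAut (FreeGroup ℕ+)) :=
  MulAction.stabilizer _ (of 1 : FreeGroup ℕ+) ⊓ MulAction.stabilizer _ endsWithInvOne

theorem artinAut_mem_endsWithInvOneStab {i : ℕ+} (hi : i ≠ 1) :
    artinAut i ∈ endsWithInvOneStab :=
  Subgroup.mem_inf.2 ⟨artinAut_apply_of_one hi, MulAction.mem_stabilizer_set.2 fun w =>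
    endsWith_map_iff (artinAut_apply_of_one hi) (artinAut_mem_avoid hi) w false⟩

theorem artinRep_shift_mem {s : Binf →* Binf}
    (hs : ∀ i : ℕ+, s (braidGen i) = braidGen (i + 1)) (q : Binf) :
    artinRep (s q) ∈ endsWithInvOneStab := by
  refine PresentedGroup.generated_by braidRels (endsWithInvOneStab.comap (artinRep.comp s))
    (fun i => ?_) q
  show artinRep (s (braidGen i)) ∈ endsWithInvOneStab
  rw [hs, artinRep_braidGen]
  exact artinAut_mem_endsWithInvOneStab
    (ne_of_apply_ne PNat.val (by have := i.pos; push_cast; omega))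

theorem mapsTo_of_mem_endsWithInvOneStab {e : MulAut (FreeGroup ℕ+)}
    (he : e ∈ endsWithInvOneStab) : Set.MapsTo e endsWithInvOne endsWithInvOne :=
  fun w hw => (MulAction.mem_stabilizer_set.1 (Subgroup.mem_inf.1 he).2 w).2 hw

theorem mapsTo_insert_of_mem_endsWithInvOneStab {e : MulAut (FreeGroup ℕ+)}
    (he : e ∈ endsWithInvOneStab) :
    Set.MapsTo e (insert (of 1) endsWithInvOne) (insert (of 1) endsWithInvOne) := by
  rintro w (rfl | hw)
  · exact .inl (MulAction.mem_stabilizer_iff.1 (Subgroup.mem_inf.1 he).1)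
  · exact .inr (mapsTo_of_mem_endsWithInvOneStab he hw)

def larueSemigroup : Subsemigroup Binf where
  carrier := {β | Set.MapsTo (artinRep β) (insert (of 1) endsWithInvOne) endsWithInvOne}
  mul_mem' {a b} ha hb := by
    simpa only [Set.mem_ofPred_eq, _root_.map_mul, MulAut.coe_mul] using
      ha.comp (hb.mono_right (Set.subset_insert _ _))

theorem one_notMem_larueSemigroup : (1 : Binf) ∉ larueSemigroup := fun h => by
  simpa [endsWithInvOne, EndsWith] using h (Set.mem_insert _ _)

theorem inv_mul_bracket_mem {s : Binf →* Binf}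
    (hs : ∀ i : ℕ+, s (braidGen i) = braidGen (i + 1)) (p q : Binf) :
    p⁻¹ * bracket s p q ∈ larueSemigroup := by
  have hσ : Set.MapsTo (artinAut 1) (insert (of 1) endsWithInvOne) endsWithInvOne :=
    mapsTo_insert_endsWith_of_eq_conj (by decide) artinAut_one_apply_of_one artinAut_one_mem_avoid
  have hp := mapsTo_insert_of_mem_endsWithInvOneStab (artinRep_shift_mem hs p⁻¹)
  have hq := mapsTo_of_mem_endsWithInvOneStab (artinRep_shift_mem hs q)
  have key : p⁻¹ * bracket s p q = s q * braidGen 1 * s p⁻¹ := by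
    simp only [bracket, mul_assoc, inv_mul_cancel_left, _root_.map_inv]
  show Set.MapsTo (artinRep _) _ _
  rw [key, _root_.map_mul, _root_.map_mul, artinRep_braidGen, MulAut.coe_mul, MulAut.coe_mul]
  exact hq.comp (hσ.comp hp)

theorem inv_mul_foldl_bracket_mem {s : Binf →* Binf}
    (hs : ∀ i : ℕ+, s (braidGen i) = braidGen (i + 1)) (p q : Binf) (l : List Binf) :
    p⁻¹ * (q :: l).foldl (bracket s) p ∈ larueSemigroup := by
  induction l generalizing p q with
  | nil => exact inv_mul_bracket_mem hs p q
  | cons q' l ih =>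
    rw [List.foldl_cons, ← mul_inv_cancel_left (bracket s p q) ((q' :: l).foldl _ _), ← mul_assoc]
    exact mul_mem (inv_mul_bracket_mem hs p q) (ih _ _)

/-- Irreflexivity in `B∞`: `p ≠ (((p[q₁])[q₂])…)[q_k]` for every `k ≥ 1`. -/
theorem bracket_irreflexive
    (s : Binf →* Binf) (hs : ∀ i : ℕ+, s (braidGen i) = braidGen (i + 1))
    (k : ℕ) (hk : 1 ≤ k) (p : Binf) (q : Fin k → Binf) :
    p ≠ (List.ofFn q).foldl (bracket s) p := by
  obtain ⟨k, rfl⟩ := Nat.exists_eq_add_of_le' hk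
  intro heq
  rw [List.ofFn_succ] at heq
  apply one_notMem_larueSemigroup
  simpa [← heq] using inv_mul_foldl_bracket_mem hs p (q 0) (List.ofFn fun i => q i.succ)
end

section
/- (Irreflexivity of the prefix relation on the free left-distributive algebra.) Let A be the free left-distributive algebra on one generator. For every k ≥ 1 and all P, Q_1, …, Q_k ∈ A, P ≠ (((P·Q_1)·Q_2)·…)·Q_k. Consequently the relation <_L, where P <_L Q iff Q = (((P·Q_1)·…)·Q_k for some Q_1, …, Q_k with k ≥ 1, is irreflexive on A. -/
/-- The left-distributivity pairs `(a(bc), (ab)(ac))` in the free magma on one generator. -/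
inductive LDPair : FreeMagma Unit → FreeMagma Unit → Prop
  | mk (a b c : FreeMagma Unit) : LDPair (a * (b * c)) ((a * b) * (a * c))

/-- The smallest congruence on the free magma on one generator containing the
left-distributivity pairs. -/
def ldCon : Con (FreeMagma Unit) := conGen LDPair

/-- The free left-distributive algebra `A` on one generator. -/
abbrev FreeLD : Type := ldCon.Quotient

/-- The generator `x` of the free left-distributive algebra. -/
def ldGen : FreeLD := (FreeMagma.of () : FreeMagma Unit)

/-!
Dehornoy's braid exponentiation `a ∧ b = a · sh(b) · σ₁ · sh(a)⁻¹` satisfies the left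
self-distributive law by the braid relations, so evaluating terms with it is well defined on
`A`; we let the resulting braids act on the free group `F_∞` through Artin's representation.
If `P = (((P·Q₁)·Q₂)·…)·Q_k` with `k ≥ 1`, the braid `ev(P)⁻¹ · ev(P·Q₁⋯Q_k)` is trivial, yet
it is a product of factors `sh(ev Q) · σ₁ · sh(ev P')⁻¹`, so it contains `σ₁` and no `σ₁⁻¹`.
Larue's argument shows that such a braid sends `x₁` to an element whose reduced word begins
with `x₁` and ends with `x₁⁻¹`, so it is not the identity. Below, indices start at `0`: `σ₀` and
`x₀` play the roles of `σ₁` and `x₁`.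
-/

open FreeGroup Pointwise

namespace FreeGroup

variable {α β : Type*}

theorem mk_singleton_false (k : α) : mk [(k, false)] = (of k)⁻¹ := by
  rw [of, inv_mk]; rfl

theorem map_mk_singleton {a : α} {b : β} {φ : FreeGroup α →* FreeGroup β} (h : φ (of a) = of b)
    (ε : Bool) : φ (mk [(a, ε)]) = mk [(b, ε)] := by
  cases ε
  · rw [mk_singleton_false, _root_.map_inv, h, mk_singleton_false]
  · exact h

theorem mulAut_ext {φ ψ : MulAut (FreeGroup α)} (h : ∀ k, φ (of k) = ψ (of k)) : φ = ψ :=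
  MulEquiv.toMonoidHom_injective (FreeGroup.ext_hom _ _ h)

def avoiding (a : α) : Subgroup (FreeGroup α) := Subgroup.closure (of '' {a}ᶜ)

theorem of_mem_avoiding {a k : α} (h : k ≠ a) : of k ∈ avoiding a :=
  Subgroup.subset_closure ⟨k, h, rfl⟩

theorem mk_mem_avoiding {a : α} {L : List (α × Bool)} (hL : ∀ x ∈ L, x.1 ≠ a) :
    mk L ∈ avoiding a := by
  induction L with
  | nil => exact one_mem _
  | cons x L ih =>
    rw [← List.singleton_append, ← mul_mk]
    refine mul_mem ?_ (ih fun y hy => hL y (List.mem_cons_of_mem x hy))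
    obtain ⟨k, _ | _⟩ := x
    · exact mk_singleton_false k ▸ inv_mem (of_mem_avoiding (hL _ List.mem_cons_self))
    · exact of_mem_avoiding (hL _ List.mem_cons_self)

theorem map_mem_avoiding {a : α} {b : β} {φ : FreeGroup α →* FreeGroup β}
    (hφ : ∀ k, k ≠ a → φ (of k) ∈ avoiding b) {g : FreeGroup α} (hg : g ∈ avoiding a) :
    φ g ∈ avoiding b := by
  suffices avoiding a ≤ (avoiding b).comap φ from this hg
  exact (Subgroup.closure_le _).2 fun _ ⟨k, hk, hφk⟩ => hφk ▸ hφ k hk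

theorem mem_stabilizer_avoiding {a : α} {φ : MulAut (FreeGroup α)}
    (h₁ : ∀ k, k ≠ a → φ (of k) ∈ avoiding a) (h₂ : ∀ k, k ≠ a → φ.symm (of k) ∈ avoiding a) :
    φ ∈ MulAction.stabilizer (MulAut (FreeGroup α)) (avoiding a) := by
  rw [MulAction.mem_stabilizer_iff]
  ext g
  rw [Subgroup.mem_pointwise_smul_iff_inv_smul_mem, MulAut.smul_def, MulAut.inv_apply]
  refine ⟨fun hg => ?_, map_mem_avoiding (φ := φ.symm.toMonoidHom) h₂⟩
  simpa using map_mem_avoiding (φ := φ.toMonoidHom) h₁ hg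

variable [DecidableEq α] [DecidableEq β]

theorem toWord_mul_of_isReduced {x y : FreeGroup α} (h : IsReduced (x.toWord ++ y.toWord)) :
    (x * y).toWord = x.toWord ++ y.toWord := by
  rw [toWord_mul, h.reduce_eq]

theorem toWord_mk_of_infix {L : List (α × Bool)} {g : FreeGroup α} (h : L <:+: g.toWord) :
    (mk L).toWord = L := by
  rw [toWord_mk, (isReduced_toWord.infix h).reduce_eq]

theorem getLast?_toWord (g : FreeGroup α) :
    g.toWord.getLast? = g⁻¹.toWord.head?.map fun x => (x.1, !x.2) := by
  simp [toWord_inv, invRev, List.getLast?_map, Option.map_map, Function.comp_def]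

theorem mem_startsWith_iff {w : α × Bool} {g : FreeGroup α} :
    g ∈ startsWith w ↔ g.toWord.head? = some w := by
  rw [startsWith, Set.mem_ofPred_eq, List.head?_eq_getElem?]

theorem mem_avoiding_iff {a : α} {g : FreeGroup α} :
    g ∈ avoiding a ↔ ∀ x ∈ g.toWord, x.1 ≠ a := by
  refine ⟨fun hg => ?_, fun hg => mk_toWord (x := g) ▸ mk_mem_avoiding hg⟩
  induction hg using Subgroup.closure_induction with
  | mem g hg => obtain ⟨k, hk, rfl⟩ := hg; simpa using hk
  | one => simp
  | mul g h _ _ ihg ihh =>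
    intro x hx
    rcases List.mem_append.1 ((toWord_mul_sublist g h).subset hx) with hx | hx
    exacts [ihg x hx, ihh x hx]
  | inv g _ ih =>
    intro x hx
    rw [toWord_inv, invRev, List.mem_reverse, List.mem_map] at hx
    obtain ⟨y, hy, rfl⟩ := hx
    exact ih y hy

theorem exists_eq_mk_singleton_mul {x : α × Bool} {g : FreeGroup α} (hg : g ∈ startsWith x) :
    ∃ r, g = mk [x] * r ∧ r.norm < g.norm ∧ r ∉ startsWith (x.1, !x.2) := by
  obtain ⟨t, ht⟩ := List.head?_eq_some_iff.1 (mem_startsWith_iff.1 hg)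
  have hred : IsReduced (x :: t) := ht ▸ isReduced_toWord
  have ht' : (mk t).toWord = t := toWord_mk_of_infix (ht ▸ (List.suffix_cons x t).isInfix)
  refine ⟨mk t, by rw [mul_mk, List.singleton_append, ← ht, mk_toWord], ?_, ?_⟩
  · simp [norm, ht', ht]
  · rw [mem_startsWith_iff, ht']
    intro h
    obtain ⟨t', rfl⟩ := List.head?_eq_some_iff.1 h
    simpa using (isReduced_cons_cons.1 hred).1 rfl

theorem exists_eq_mul_of_not_mem_startsWith {a : α} {g : FreeGroup α} (hg1 : g ≠ 1)
    (hg : ∀ ε, g ∉ startsWith (a, ε)) :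
    ∃ h r, g = h * r ∧ h ∈ avoiding a ∧ h ≠ 1 ∧ r.norm < g.norm ∧
      (r = 1 ∨ ∃ δ, r ∈ startsWith (a, δ)) := by
  set p : α × Bool → Bool := fun x => x.1 != a
  set T := g.toWord.takeWhile p
  set D := g.toWord.dropWhile p
  have hTD : T ++ D = g.toWord := List.takeWhile_append_dropWhile
  have hT : (mk T).toWord = T := toWord_mk_of_infix ⟨[], D, by rw [List.nil_append, hTD]⟩
  have hD : (mk D).toWord = D := toWord_mk_of_infix ⟨T, [], by rw [List.append_nil, hTD]⟩
  obtain ⟨y, t, hyt⟩ := List.ne_nil_iff_exists_cons.1 (mt toWord_eq_nil_iff.1 hg1)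
  have hya : y.1 ≠ a := fun h => hg y.2 (mem_startsWith_iff.2 (by simp [hyt, ← h]))
  have hTne : T ≠ [] := by simp [T, hyt, p, hya]
  refine ⟨mk T, mk D, by rw [mul_mk, hTD, mk_toWord], mk_mem_avoiding fun x hx => ?_, ?_, ?_, ?_⟩
  · simpa [p] using List.mem_takeWhile_imp hx
  · rwa [ne_eq, ← toWord_eq_nil_iff, hT]
  · have : T.length + D.length = g.toWord.length := by rw [← List.length_append, hTD]
    have := List.length_pos_of_ne_nil hTne
    simp only [norm, hD]
    omega
  · have := List.head?_dropWhile_not p g.toWord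
    rcases hx : D.head? with _ | x
    · exact Or.inl (by rw [← toWord_eq_nil_iff, hD, ← List.head?_eq_none_iff, hx])
    · refine Or.inr ⟨x.2, mem_startsWith_iff.2 ?_⟩
      rw [hD, hx]
      simp only [D, hx, p, bne_eq_false_iff_eq] at this
      rw [← this]

theorem mul_not_mem_startsWith {a : α} {h r : FreeGroup α} (hh : h ∈ avoiding a) (h1 : h ≠ 1)
    (hr : r = 1 ∨ ∃ δ, r ∈ startsWith (a, δ)) (ε : Bool) : h * r ∉ startsWith (a, ε) := by
  have hne : h.toWord ≠ [] := by rwa [ne_eq, toWord_eq_nil_iff]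
  obtain ⟨z, hz⟩ := Option.isSome_iff_exists.1 (List.isSome_head?.2 hne)
  have hza : z.1 ≠ a := mem_avoiding_iff.1 hh z (List.mem_of_mem_head? hz)
  have hjoin : ∀ x ∈ h.toWord.getLast?, ∀ y ∈ r.toWord.head?, x.1 ≠ y.1 := by
    intro x hx y hy
    rcases hr with rfl | ⟨δ, hδ⟩
    · simp at hy
    · rw [mem_startsWith_iff.1 hδ, Option.mem_some_iff] at hy
      exact hy ▸ mem_avoiding_iff.1 hh x (List.mem_of_mem_getLast? hx)
  have hred : IsReduced (h.toWord ++ r.toWord) :=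
    List.isChain_append.2 ⟨isReduced_toWord, isReduced_toWord,
      fun x hx y hy hxy => absurd hxy (hjoin x hx y hy)⟩
  rw [mem_startsWith_iff, toWord_mul_of_isReduced hred, List.head?_append_of_ne_nil _ hne, hz]
  rintro ⟨⟩
  exact hza rfl

/-- Induction on the length of `g`: its reduced word is an alternation of letters `x_a^{±1}` and
maximal nontrivial blocks from `avoiding a`, which `φ` sends to letters `y_b^{±1}` and
nontrivial elements of `avoiding b`, with no cancellation between consecutive pieces. -/
theorem map_mem_startsWith_iff {a : α} {b : β} {φ : FreeGroup α →* FreeGroup β}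
    (hinj : Function.Injective φ) (hab : φ (of a) = of b)
    (hφ : ∀ g ∈ avoiding a, φ g ∈ avoiding b) (g : FreeGroup α) (ε : Bool) :
    φ g ∈ startsWith (b, ε) ↔ g ∈ startsWith (a, ε) := by
  induction hn : g.norm using Nat.strong_induction_on generalizing g ε with
  | _ n ih =>
    by_cases hg1 : g = 1
    · subst hg1
      rw [_root_.map_one]
      exact iff_of_false (startsWith.ne_one 1 · rfl) (startsWith.ne_one 1 · rfl)
    by_cases hs : ∃ δ, g ∈ startsWith (a, δ)
    · obtain ⟨δ, hδ⟩ := hs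
      obtain ⟨r, rfl, hr, hr'⟩ := exists_eq_mk_singleton_mul hδ
      have hφg : φ (mk [(a, δ)] * r) ∈ startsWith (b, δ) := by
        rw [_root_.map_mul, map_mk_singleton hab]
        exact startsWith_mk_mul _ fun h => hr' ((ih _ (hn ▸ hr) r _ rfl).1 h)
      rw [mem_startsWith_iff] at hφg hδ
      rw [mem_startsWith_iff, mem_startsWith_iff, hφg, hδ]
      simp
    · push Not at hs
      obtain ⟨h, r, rfl, hh, h1, hr, hr1⟩ := exists_eq_mul_of_not_mem_startsWith hg1 hs
      refine iff_of_false ?_ (hs ε)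
      rw [_root_.map_mul]
      refine mul_not_mem_startsWith (hφ h hh) ((map_ne_one_iff φ hinj).2 h1) ?_ ε
      rcases hr1 with rfl | ⟨δ, hδ⟩
      · exact Or.inl (_root_.map_one φ)
      · exact Or.inr ⟨δ, (ih _ (hn ▸ hr) r δ rfl).2 hδ⟩

/-- The reduced word of `g` has the form `x_a ⋯ x_a⁻¹`. -/
def IsBracketed (a : α) (g : FreeGroup α) : Prop :=
  g ∈ startsWith (a, true) ∧ g⁻¹ ∈ startsWith (a, true)

theorem IsBracketed.map {a : α} {b : β} {φ : FreeGroup α →* FreeGroup β}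
    (hinj : Function.Injective φ) (hab : φ (of a) = of b)
    (hφ : ∀ g ∈ avoiding a, φ g ∈ avoiding b) {g : FreeGroup α} (hg : IsBracketed a g) :
    IsBracketed b (φ g) :=
  ⟨(map_mem_startsWith_iff hinj hab hφ g true).2 hg.1,
    _root_.map_inv φ g ▸ (map_mem_startsWith_iff hinj hab hφ g⁻¹ true).2 hg.2⟩

theorem of_mul_mul_inv_mem_startsWith {a : α} {h : FreeGroup α} {x y : α × Bool}
    (hx : h ∈ startsWith x) (hy : h⁻¹ ∈ startsWith y) (hxa : x.1 ≠ a) (hya : y.1 ≠ a) :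
    of a * h * (of a)⁻¹ ∈ startsWith (a, true) := by
  have hlast : h.toWord.getLast? = some (y.1, !y.2) := by
    rw [getLast?_toWord, mem_startsWith_iff.1 hy]; rfl
  have hred : IsReduced (h.toWord ++ (of a)⁻¹.toWord) := by
    rw [toWord_inv, toWord_of]
    refine List.isChain_append.2 ⟨isReduced_toWord, IsReduced.singleton, fun z hz w hw hzw => ?_⟩
    rw [hlast, Option.mem_some_iff] at hz
    simp only [invRev, List.map_cons, List.map_nil, List.reverse_singleton, List.head?_cons,
      Option.mem_some_iff] at hw
    subst hz hw
    exact absurd hzw hya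
  have hne : h.toWord ≠ [] := fun h' => by simp [h'] at hlast
  rw [mul_assoc]
  refine startsWith_mk_mul _ fun hmem => hxa ?_
  rw [mem_startsWith_iff, toWord_mul_of_isReduced hred, List.head?_append_of_ne_nil _ hne,
    mem_startsWith_iff.1 hx] at hmem
  cases hmem
  rfl

theorem isBracketed_of_mul_mul_inv {a : α} {h : FreeGroup α} {x y : α × Bool}
    (hx : h ∈ startsWith x) (hy : h⁻¹ ∈ startsWith y) (hxa : x.1 ≠ a) (hya : y.1 ≠ a) :
    IsBracketed a (of a * h * (of a)⁻¹) :=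
  ⟨of_mul_mul_inv_mem_startsWith hx hy hxa hya, by
    rw [show (of a * h * (of a)⁻¹)⁻¹ = of a * h⁻¹ * (of a)⁻¹ by group]
    exact of_mul_mul_inv_mem_startsWith hy ((inv_inv h).symm ▸ hx) hya hxa⟩

end FreeGroup

def artinGen (i k : ℕ) : FreeGroup ℕ :=
  if k = i then of i * of (i + 1) * (of i)⁻¹ else if k = i + 1 then of i else of k

def artinGenInv (i k : ℕ) : FreeGroup ℕ :=
  if k = i then of (i + 1) else if k = i + 1 then (of (i + 1))⁻¹ * of i * of (i + 1) else of k

def artin (i : ℕ) : MulAut (FreeGroup ℕ) :=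
  MonoidHom.toMulEquiv (lift (artinGen i)) (lift (artinGenInv i))
    (FreeGroup.ext_hom _ _ fun k => by
      rcases eq_or_ne k i with rfl | h
      · simp [artinGen, artinGenInv, mul_assoc]
      rcases eq_or_ne k (i + 1) with rfl | h'
      · simp [artinGen, artinGenInv]
      · simp [artinGen, artinGenInv, h, h'])
    (FreeGroup.ext_hom _ _ fun k => by
      rcases eq_or_ne k i with rfl | h
      · simp [artinGen, artinGenInv]
      rcases eq_or_ne k (i + 1) with rfl | h'
      · simp [artinGen, artinGenInv, mul_assoc]
      · simp [artinGen, artinGenInv, h, h'])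

theorem artin_apply_self (i : ℕ) : artin i (of i) = of i * of (i + 1) * (of i)⁻¹ := by
  simp [artin, artinGen]

theorem artin_apply_succ (i : ℕ) : artin i (of (i + 1)) = of i := by
  simp [artin, artinGen]

theorem artin_apply_of_ne {i k : ℕ} (h : k ≠ i) (h' : k ≠ i + 1) : artin i (of k) = of k := by
  simp [artin, artinGen, h, h']

theorem artin_symm_apply_self (i : ℕ) : (artin i).symm (of i) = of (i + 1) := by
  simp [artin, artinGenInv]

theorem artin_symm_apply_succ (i : ℕ) :
    (artin i).symm (of (i + 1)) = (of (i + 1))⁻¹ * of i * of (i + 1) := by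
  simp [artin, artinGenInv]

theorem artin_symm_apply_of_ne {i k : ℕ} (h : k ≠ i) (h' : k ≠ i + 1) :
    (artin i).symm (of k) = of k := by
  simp [artin, artinGenInv, h, h']

theorem artin_braid (i : ℕ) :
    artin i * artin (i + 1) * artin i = artin (i + 1) * artin i * artin (i + 1) := by
  refine mulAut_ext fun k => ?_
  rcases (by omega : k = i ∨ k = i + 1 ∨ k = i + 1 + 1 ∨ (k ≠ i ∧ k ≠ i + 1 ∧ k ≠ i + 1 + 1))
    with rfl | rfl | rfl | ⟨h1, h2, h3⟩ <;>
  simp (disch := omega) only [MulAut.mul_apply, _root_.map_mul, _root_.map_inv, artin_apply_self,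
    artin_apply_succ, artin_apply_of_ne]
  group

theorem artin_comm {i j : ℕ} (h : i + 2 ≤ j) : artin i * artin j = artin j * artin i := by
  refine mulAut_ext fun k => ?_
  rcases (by omega : k = i ∨ k = i + 1 ∨ k = j ∨ k = j + 1 ∨
      (k ≠ i ∧ k ≠ i + 1 ∧ k ≠ j ∧ k ≠ j + 1)) with rfl | rfl | rfl | rfl | ⟨h1, h2, h3, h4⟩ <;>
  simp (disch := omega) only [MulAut.mul_apply, _root_.map_mul, _root_.map_inv, artin_apply_self,
    artin_apply_succ, artin_apply_of_ne]

/-- Contains the Artin images of all braids not involving `σ₀`. -/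
def shiftedAut : Subgroup (MulAut (FreeGroup ℕ)) :=
  MulAction.stabilizer _ (of 0 : FreeGroup ℕ) ⊓ MulAction.stabilizer _ (avoiding 0)

theorem artin_mem_shiftedAut {i : ℕ} (hi : 1 ≤ i) : artin i ∈ shiftedAut := by
  refine ⟨artin_apply_of_ne (by omega) (by omega), mem_stabilizer_avoiding (fun k hk => ?_)
    (fun k hk => ?_)⟩
  · rcases (by omega : k = i ∨ k = i + 1 ∨ (k ≠ i ∧ k ≠ i + 1)) with rfl | rfl | ⟨h1, h2⟩
    · rw [artin_apply_self]
      exact mul_mem (mul_mem (of_mem_avoiding hk) (of_mem_avoiding (by omega)))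
        (inv_mem (of_mem_avoiding hk))
    · rw [artin_apply_succ]; exact of_mem_avoiding (by omega)
    · rw [artin_apply_of_ne h1 h2]; exact of_mem_avoiding hk
  · rcases (by omega : k = i ∨ k = i + 1 ∨ (k ≠ i ∧ k ≠ i + 1)) with rfl | rfl | ⟨h1, h2⟩
    · rw [artin_symm_apply_self]; exact of_mem_avoiding (by omega)
    · rw [artin_symm_apply_succ]
      exact mul_mem (mul_mem (inv_mem (of_mem_avoiding hk)) (of_mem_avoiding (by omega)))
        (of_mem_avoiding hk)
    · rw [artin_symm_apply_of_ne h1 h2]; exact of_mem_avoiding hk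

theorem IsBracketed.map_of_mem_shiftedAut {φ : MulAut (FreeGroup ℕ)} (hφ : φ ∈ shiftedAut)
    {g : FreeGroup ℕ} (hg : IsBracketed 0 g) : IsBracketed 0 (φ g) :=
  hg.map (φ := φ.toMonoidHom) φ.injective hφ.1 fun h hh =>
    MulAction.mem_stabilizer_iff.1 hφ.2 ▸ Subgroup.smul_mem_pointwise_smul h φ _ hh

/-- Larue's invariant: the Artin images of braids containing `σ₀` but not `σ₀⁻¹` have it. -/
def IsBracketing (φ : MulAut (FreeGroup ℕ)) : Prop :=
  ∀ g, (g = of 0 ∨ IsBracketed 0 g) → IsBracketed 0 (φ g)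

theorem IsBracketing.mul {φ ψ : MulAut (FreeGroup ℕ)} (hφ : IsBracketing φ)
    (hψ : IsBracketing ψ) : IsBracketing (φ * ψ) :=
  fun g hg => hφ _ (Or.inr (hψ g hg))

theorem IsBracketing.mul_mul_of_mem_shiftedAut {φ χ ψ : MulAut (FreeGroup ℕ)}
    (hχ : χ ∈ shiftedAut) (hφ : IsBracketing φ) (hψ : ψ ∈ shiftedAut) :
    IsBracketing (χ * φ * ψ) := by
  intro g hg
  refine IsBracketed.map_of_mem_shiftedAut hχ (hφ _ ?_)
  rcases hg with rfl | hg
  · exact Or.inl hψ.1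
  · exact Or.inr (IsBracketed.map_of_mem_shiftedAut hψ hg)

theorem not_isBracketing_one : ¬ IsBracketing 1 := by
  intro h
  have := (h (of 0) (Or.inl rfl)).2
  simp [mem_startsWith_iff, toWord_inv, invRev] at this

theorem isBracketing_artin_zero : IsBracketing (artin 0) := by
  -- `μ` swaps `x₀` and `x₁` and conjugates the other letters by `x₀`, so it turns
  -- `x₀`-bracketed elements into `x₁`-bracketed ones, which `σ₀ = conj x₀ ∘ μ` brackets again
  set μ := (MulAut.conj (of 0))⁻¹ * artin 0
  have hconj : ∀ g, artin 0 g = of 0 * μ g * (of 0)⁻¹ := fun g => by simp [μ, mul_assoc]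
  have hμ0 : μ (of 0) = of 1 := by simp [μ, artin_apply_self, mul_assoc]
  have hμ : ∀ k, k ≠ 0 → μ (of k) ∈ avoiding 1 := by
    intro k hk
    rcases eq_or_ne k 1 with rfl | hk1
    · simpa [μ, artin_apply_succ 0] using of_mem_avoiding (show 0 ≠ 1 by omega)
    · simp only [μ, MulAut.mul_apply, MulAut.inv_apply, artin_apply_of_ne hk hk1,
        MulAut.conj_symm_apply]
      exact mul_mem (mul_mem (inv_mem (of_mem_avoiding (by omega))) (of_mem_avoiding hk1))
        (of_mem_avoiding (by omega))
  intro g hg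
  rw [hconj]
  rcases hg with rfl | hg
  · rw [hμ0]
    exact isBracketed_of_mul_mul_inv (x := (1, true)) (y := (1, false))
      (by simp [mem_startsWith_iff]) (by simp [mem_startsWith_iff, toWord_inv, invRev])
      one_ne_zero one_ne_zero
  · have := hg.map (φ := μ.toMonoidHom) μ.injective hμ0 fun _ => map_mem_avoiding hμ
    exact isBracketed_of_mul_mul_inv this.1 this.2 one_ne_zero one_ne_zero

/-- This is `termBraid (a * (b * c)) n = termBraid ((a * b) * (a * c)) n` written out, with
`Xᵢ = termBraid x (n + i)`, `s = σₙ` and `t = σₙ₊₁`. -/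
theorem ld_identity_of_braid_relation {G : Type*} [Group G] {s t A₀ A₁ A₂ B₁ B₂ C₂ : G}
    (hst : s * t * s = t * s * t) (hA : Commute s A₂) (hB : Commute s B₂) (hC : Commute s C₂) :
    A₀ * (B₁ * C₂ * t * B₂⁻¹) * s * A₁⁻¹ =
      A₀ * B₁ * s * A₁⁻¹ * (A₁ * C₂ * t * A₂⁻¹) * s * (A₁ * B₂ * t * A₂⁻¹)⁻¹ := by
  calc A₀ * (B₁ * C₂ * t * B₂⁻¹) * s * A₁⁻¹ = A₀ * B₁ * C₂ * t * (s * B₂⁻¹) * A₁⁻¹ := by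
        rw [hB.inv_right.eq]; group
    _ = A₀ * B₁ * C₂ * (s * t * s) * t⁻¹ * B₂⁻¹ * A₁⁻¹ := by rw [hst]; group
    _ = A₀ * B₁ * (s * C₂) * t * (A₂⁻¹ * s * A₂) * t⁻¹ * B₂⁻¹ * A₁⁻¹ := by
        rw [hC.eq, mul_assoc A₂⁻¹, hA.eq, inv_mul_cancel_left]; group
    _ = _ := by group

/-- Dehornoy's braid exponentiation `a ∧ b = a · sh(b) · σ₀ · sh(a)⁻¹`, acting through the Artin
representation; `termBraid t n` is the image of `sh^n (t)`. -/
def termBraid : FreeMagma Unit → ℕ → MulAut (FreeGroup ℕ)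
  | .of _, _ => 1
  | .mul a b, n => termBraid a n * termBraid b (n + 1) * artin n * (termBraid a (n + 1))⁻¹

theorem termBraid_mul (a b : FreeMagma Unit) (n : ℕ) :
    termBraid (a * b) n = termBraid a n * termBraid b (n + 1) * artin n * (termBraid a (n + 1))⁻¹ :=
  rfl

theorem termBraid_mem_closure (t : FreeMagma Unit) (n : ℕ) :
    termBraid t n ∈ Subgroup.closure (artin '' Set.Ici n) := by
  induction t generalizing n with
  | ih1 => exact one_mem _
  | ih2 a b iha ihb =>
    have hmono := Subgroup.closure_mono
      (Set.image_mono (f := artin) (Set.Ici_subset_Ici.2 n.le_succ))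
    exact mul_mem (mul_mem (mul_mem (iha n) (hmono (ihb (n + 1))))
      (Subgroup.subset_closure ⟨n, Set.mem_Ici.2 le_rfl, rfl⟩)) (inv_mem (hmono (iha (n + 1))))

theorem termBraid_mem_shiftedAut (t : FreeMagma Unit) {n : ℕ} (hn : 1 ≤ n) :
    termBraid t n ∈ shiftedAut :=
  (Subgroup.closure_le _).2 (by rintro _ ⟨j, hj, rfl⟩; exact artin_mem_shiftedAut (hn.trans hj))
    (termBraid_mem_closure t n)

theorem commute_artin_termBraid (t : FreeMagma Unit) {i n : ℕ} (h : i + 2 ≤ n) :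
    Commute (artin i) (termBraid t n) := by
  have : Subgroup.closure (artin '' Set.Ici n) ≤ Subgroup.centralizer {artin i} :=
    (Subgroup.closure_le _).2 <| by
      rintro _ ⟨j, hj, rfl⟩
      exact Subgroup.mem_centralizer_singleton_iff.2 (artin_comm (h.trans hj)).symm
  exact (Subgroup.mem_centralizer_singleton_iff.1 (this (termBraid_mem_closure t n))).symm

theorem termBraid_ld (a b c : FreeMagma Unit) (n : ℕ) :
    termBraid (a * (b * c)) n = termBraid (a * b * (a * c)) n := by
  simp only [termBraid_mul]
  exact ld_identity_of_braid_relation (artin_braid n) (commute_artin_termBraid a le_rfl)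
    (commute_artin_termBraid b le_rfl) (commute_artin_termBraid c le_rfl)

def termBraidCon : Con (FreeMagma Unit) where
  r t s := ∀ n, termBraid t n = termBraid s n
  iseqv := ⟨fun _ _ => rfl, fun h n => (h n).symm, fun h₁ h₂ n => (h₁ n).trans (h₂ n)⟩
  mul' h₁ h₂ n := by simp only [termBraid_mul, h₁ n, h₁ (n + 1), h₂ (n + 1)]

theorem ldCon_le_termBraidCon : ldCon ≤ termBraidCon :=
  Con.conGen_le.2 fun _ _ ⟨a, b, c⟩ => termBraid_ld a b c

def ldBraid (P : FreeLD) (n : ℕ) : MulAut (FreeGroup ℕ) :=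
  Con.liftOn P (termBraid · n) fun _ _ h => ldCon_le_termBraidCon h n

theorem ldBraid_mul (P Q : FreeLD) (n : ℕ) :
    ldBraid (P * Q) n = ldBraid P n * ldBraid Q (n + 1) * artin n * (ldBraid P (n + 1))⁻¹ :=
  Con.induction_on₂ P Q fun _ _ => rfl

theorem ldBraid_mem_shiftedAut (P : FreeLD) {n : ℕ} (hn : 1 ≤ n) : ldBraid P n ∈ shiftedAut :=
  Con.induction_on P fun t => termBraid_mem_shiftedAut t hn

theorem isBracketing_ldBraid_mul (P Q : FreeLD) :
    IsBracketing ((ldBraid P 0)⁻¹ * ldBraid (P * Q) 0) := by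
  rw [ldBraid_mul, show ∀ x y z w : MulAut (FreeGroup ℕ), x⁻¹ * (x * y * z * w) = y * z * w by
    intros; group]
  exact isBracketing_artin_zero.mul_mul_of_mem_shiftedAut (ldBraid_mem_shiftedAut Q le_rfl)
    (inv_mem (ldBraid_mem_shiftedAut P le_rfl))

theorem isBracketing_ldBraid_foldl (P Q : FreeLD) (L : List FreeLD) :
    IsBracketing ((ldBraid P 0)⁻¹ * ldBraid (L.foldl (· * ·) (P * Q)) 0) := by
  induction L generalizing P Q with
  | nil => exact isBracketing_ldBraid_mul P Q
  | cons R L ih =>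
    have h := (isBracketing_ldBraid_mul P Q).mul (ih (P * Q) R)
    rwa [mul_assoc, mul_inv_cancel_left] at h

theorem ne_foldl_mul (P Q : FreeLD) (L : List FreeLD) : P ≠ L.foldl (· * ·) (P * Q) := by
  intro h
  have := isBracketing_ldBraid_foldl P Q L
  rw [← h, inv_mul_cancel] at this
  exact not_isBracketing_one this

/-- Irreflexivity in the free left-distributive algebra on one generator:
`P ≠ (((P·Q₁)·Q₂)·…)·Q_k` for every `k ≥ 1`; consequently the strict-prefix
relation `<_L` is irreflexive. -/
theorem freeLD_irreflexive :
    (∀ (k : ℕ), 1 ≤ k → ∀ (P : FreeLD) (Q : Fin k → FreeLD),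
      P ≠ (List.ofFn Q).foldl (· * ·) P) ∧
    (∀ P : FreeLD,
      ¬ ∃ (k : ℕ) (_ : 1 ≤ k) (Q : Fin k → FreeLD),
        P = (List.ofFn Q).foldl (· * ·) P) := by
  have hne : ∀ (k : ℕ), 1 ≤ k → ∀ (P : FreeLD) (Q : Fin k → FreeLD),
      P ≠ (List.ofFn Q).foldl (· * ·) P := by
    rintro (_ | k) hk P Q
    · omega
    · rw [List.ofFn_succ, List.foldl_cons]
      exact ne_foldl_mul P (Q 0) _
  exact ⟨hne, fun P ⟨k, hk, Q, h⟩ => hne k hk P Q h⟩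
end
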